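/- Let n ≥ 1, d ≥ 1, and let κ ≥ 1 be the integer with κd = lcm(n+1, d). Let A ∈ SL_{n+1}(ℂ) and σ ≥ 1 be such that A^σ = τ·E_{n+1} for some τ ∈ ℂ. If f is a nonzero homogeneous polynomial of degree d in ℂ[x_0,…,x_n] with Af = λf for some λ ∈ ℂ, then λ^{κσ} = 1. -/
import Mathlib


open MvPolynomial

/-- The action of a matrix on a polynomial: `(A f)(x) = f (A x)`. -/
noncomputable def matAct {N : ℕ} (A : Matrix (Fin N) (Fin N) ℂ)
    (f : MvPolynomial (Fin N) ℂ) : MvPolynomial (Fin N) ℂ :=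
  MvPolynomial.aeval (fun i => ∑ j, MvPolynomial.C (A i j) * MvPolynomial.X j) f

lemma matAct_comp {N : ℕ} (A B : Matrix (Fin N) (Fin N) ℂ)
    (f : MvPolynomial (Fin N) ℂ) :
    matAct B (matAct A f) = matAct (A * B) f := by
  unfold matAct
  have : (aeval (fun i => ∑ j, C (B i j) * X j : Fin N → MvPolynomial (Fin N) ℂ)).comp
      (aeval (fun i => ∑ j, C (A i j) * X j))
      = aeval (fun i => ∑ j, C ((A * B) i j) * X j) := by
    apply algHom_ext
    intro i
    simp only [AlgHom.comp_apply, aeval_X, map_sum, map_mul, aeval_C, algebraMap_eq,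
      Matrix.mul_apply]
    simp only [Finset.mul_sum, Finset.sum_mul, mul_assoc]
    rw [Finset.sum_comm]
  exact AlgHom.congr_fun this f
lemma matAct_smul {N : ℕ} (A : Matrix (Fin N) (Fin N) ℂ) (c : ℂ)
    (f : MvPolynomial (Fin N) ℂ) : matAct A (c • f) = c • matAct A f := by
  unfold matAct; exact map_smul _ c f

lemma matAct_pow {N : ℕ} (A : Matrix (Fin N) (Fin N) ℂ) (lam : ℂ)
    (f : MvPolynomial (Fin N) ℂ) (hAf : matAct A f = lam • f) (k : ℕ) :
    matAct (A ^ k) f = lam ^ k • f := by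
  induction k with
  | zero =>
    simp only [pow_zero, one_smul]
    unfold matAct
    have : (aeval (fun i => ∑ j, C ((1 : Matrix (Fin N) (Fin N) ℂ) i j) * X j)
        : MvPolynomial (Fin N) ℂ →ₐ[ℂ] MvPolynomial (Fin N) ℂ) = aeval X := by
      apply algHom_ext
      intro i
      simp [Matrix.one_apply, apply_ite (C (σ := Fin N)), Finset.sum_ite_eq']
    rw [this, aeval_X_left_apply]
  | succ k ih =>
    rw [pow_succ, ← matAct_comp, ih, matAct_smul, hAf, smul_smul, pow_succ,
      mul_comm]

lemma matAct_scalar {N d : ℕ} (τ : ℂ) (f : MvPolynomial (Fin N) ℂ)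
    (hf : f.IsHomogeneous d) :
    matAct (τ • (1 : Matrix (Fin N) (Fin N) ℂ)) f = τ ^ d • f := by
  unfold matAct
  have hg : (fun i : Fin N => ∑ j, C ((τ • (1 : Matrix (Fin N) (Fin N) ℂ)) i j) * X j)
      = fun i => C τ * X i := by
    funext i
    simp [Matrix.smul_apply, Matrix.one_apply, apply_ite (C (σ := Fin N)),
      Finset.sum_ite_eq', mul_comm]
  rw [hg]
  conv_lhs => rw [f.as_sum]
  rw [map_sum]
  conv_rhs => rw [f.as_sum]
  rw [Finset.smul_sum]
  refine Finset.sum_congr rfl fun u hu => ?_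
  rw [aeval_monomial]
  have hdeg : ∑ i ∈ u.support, u i = d := by
    have := hf (mem_support_iff.mp hu)
    rw [Finsupp.weight_apply] at this
    simpa [Finsupp.sum] using this
  have hprod : (u.prod fun i k => (C τ * X i : MvPolynomial (Fin N) ℂ) ^ k)
      = C (τ ^ d) * u.prod fun i k => (X i : MvPolynomial (Fin N) ℂ) ^ k := by
    rw [Finsupp.prod, Finsupp.prod]
    simp only [mul_pow, Finset.prod_mul_distrib, ← map_pow, ← map_prod]
    rw [Finset.prod_pow_eq_pow_sum, hdeg]
  rw [hprod, smul_eq_C_mul, monomial_eq, algebraMap_eq]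
  ring

theorem stmt5 {n d : ℕ} (hn : 1 ≤ n) (hd : 1 ≤ d)
    (κ : ℕ) (hκ : 1 ≤ κ) (hκd : κ * d = Nat.lcm (n + 1) d)
    (A : Matrix (Fin (n + 1)) (Fin (n + 1)) ℂ) (hA : A.det = 1)
    (σ : ℕ) (hσ : 1 ≤ σ) (τ : ℂ)
    (hAσ : A ^ σ = τ • (1 : Matrix (Fin (n + 1)) (Fin (n + 1)) ℂ))
    (f : MvPolynomial (Fin (n + 1)) ℂ) (hf0 : f ≠ 0) (hf : f.IsHomogeneous d)
    (lam : ℂ) (hAf : matAct A f = lam • f) :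
    lam ^ (κ * σ) = 1 := by
  have hτ : τ ^ (n + 1) = 1 := by
    have := congrArg Matrix.det hAσ
    rw [Matrix.det_pow, hA, one_pow, Matrix.det_smul, Matrix.det_one, mul_one,
      Fintype.card_fin] at this
    exact this.symm
  have h1 : matAct (A ^ σ) f = lam ^ σ • f := matAct_pow A lam f hAf σ
  have h2 : matAct (A ^ σ) f = τ ^ d • f := by
    rw [hAσ]; exact matAct_scalar τ f hf
  have hls : lam ^ σ = τ ^ d := by
    have := h1.symm.trans h2
    by_contra hne
    exact hf0 (by
      have := sub_eq_zero.mpr this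
      rw [← sub_smul] at this
      exact (smul_eq_zero.mp this).resolve_left (sub_ne_zero.mpr fun h => hne h) )
  have hdvd : (n + 1) ∣ κ * d := hκd ▸ Nat.dvd_lcm_left _ _
  obtain ⟨m, hm⟩ := hdvd
  calc lam ^ (κ * σ) = (lam ^ σ) ^ κ := by rw [← pow_mul, mul_comm]
    _ = (τ ^ d) ^ κ := by rw [hls]
    _ = (τ ^ (n + 1)) ^ m := by rw [← pow_mul, ← pow_mul, mul_comm d κ, hm]
    _ = 1 := by rw [hτ, one_pow]
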